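/- arXiv:1605.06203 — 9 statements merged into one kernel-verified Lean document; each statement's English description precedes it below -/
import Mathlib

section
/- Let X, Y be in the spectrahedron S_d, and let τ, γ ∈ [0,1] satisfy γτ/(1-γ) ≥ ‖X - Y‖_F (with γ < 1). Let P be the orthogonal projection onto the span of eigenvectors of Y with eigenvalues of magnitude at least τ. Then Y ⪰ (1-γ)·P X P in the Loewner order. -/
open Matrix BigOperators

noncomputable def frobNorm {d : ℕ} (A : Matrix (Fin d) (Fin d) ℝ) : ℝ :=
  Real.sqrt (∑ i, ∑ j, (A i j) ^ 2)

noncomputable def vnorm {d : ℕ} (v : Fin d → ℝ) : ℝ :=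
  Real.sqrt (∑ i, (v i) ^ 2)

def dotp {d : ℕ} (A B : Matrix (Fin d) (Fin d) ℝ) : ℝ :=
  ∑ i, ∑ j, A i j * B i j

def quadForm {d : ℕ} (A : Matrix (Fin d) (Fin d) ℝ) (v : Fin d → ℝ) : ℝ :=
  ∑ i, ∑ j, v i * A i j * v j

/-- The spectrahedron: real symmetric PSD matrices with unit trace. -/
def Spectra (d : ℕ) : Set (Matrix (Fin d) (Fin d) ℝ) :=
  {X | X.PosSemidef ∧ X.trace = 1}

/-- Projection onto the span of eigenvectors of `Y` whose eigenvalues have magnitude ≥ τ. -/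
noncomputable def specProj {d : ℕ} {Y : Matrix (Fin d) (Fin d) ℝ}
    (hY : Y.IsHermitian) (τ : ℝ) : Matrix (Fin d) (Fin d) ℝ :=
  ∑ j : Fin d, if τ ≤ |hY.eigenvalues j| then
    Matrix.vecMulVec (fun i => hY.eigenvectorBasis j i) (fun i => hY.eigenvectorBasis j i)
  else 0

/-!
`P` is the functional calculus `1_{|t| ≥ τ}(Y)`, so it is a star projection commuting with `Y`,
and positivity of `Y` gives `τ P ≤ P Y P ≤ Y`. Since the Frobenius norm dominates the operator
norm, `P (X - Y) P ≤ ‖X - Y‖_F P`, and the hypothesis turns this into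
`(1 - γ) P (X - Y) P ≤ γ τ P ≤ γ P Y P`. Hence `(1 - γ) P X P ≤ P Y P ≤ Y`.
-/

open scoped MatrixOrder

lemma Matrix.continuousOn_real_spectrum {n 𝕜 : Type*} [Fintype n] [DecidableEq n] [RCLike 𝕜]
    (f : ℝ → ℝ) (A : Matrix n n 𝕜) : ContinuousOn f (spectrum ℝ A) :=
  A.finite_real_spectrum.continuousOn f

lemma dotProduct_mulVec_le_frobNorm_mul {d : ℕ} (A : Matrix (Fin d) (Fin d) ℝ)
    (x : Fin d → ℝ) :
    x ⬝ᵥ A *ᵥ x ≤ frobNorm A * (x ⬝ᵥ x) := by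
  have hquad : x ⬝ᵥ A *ᵥ x = ∑ p : Fin d × Fin d, A p.1 p.2 * (x p.1 * x p.2) := by
    simp only [dotProduct, mulVec, Finset.mul_sum, Fintype.sum_prod_type]
    exact Finset.sum_congr rfl fun i _ => Finset.sum_congr rfl fun j _ => by ring
  have hsq : ∑ p : Fin d × Fin d, (x p.1 * x p.2) ^ 2 = (x ⬝ᵥ x) ^ 2 := by
    simp only [Fintype.sum_prod_type, dotProduct, sq, Finset.sum_mul_sum]
    exact Finset.sum_congr rfl fun i _ => Finset.sum_congr rfl fun j _ => by ring
  calc x ⬝ᵥ A *ᵥ x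
      ≤ √(∑ p : Fin d × Fin d, A p.1 p.2 ^ 2) *
          √(∑ p : Fin d × Fin d, (x p.1 * x p.2) ^ 2) :=
        hquad ▸ Real.sum_mul_le_sqrt_mul_sqrt _ _ _
    _ = frobNorm A * (x ⬝ᵥ x) := by
        have hxx : 0 ≤ x ⬝ᵥ x := Finset.sum_nonneg fun i _ => mul_self_nonneg (x i)
        rw [hsq, Real.sqrt_sq hxx]
        simp only [frobNorm, Fintype.sum_prod_type]

lemma le_frobNorm_smul_one {d : ℕ} {A : Matrix (Fin d) (Fin d) ℝ} (hA : A.IsHermitian) :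
    A ≤ frobNorm A • (1 : Matrix (Fin d) (Fin d) ℝ) := by
  rw [Matrix.le_iff, Matrix.posSemidef_iff_dotProduct_mulVec]
  refine ⟨(Matrix.isHermitian_one.smul (IsSelfAdjoint.all _)).sub hA, fun x => ?_⟩
  simpa [sub_mulVec, smul_mulVec, dotProduct_sub] using dotProduct_mulVec_le_frobNorm_mul A x

lemma IsStarProjection.mul_mul_le_frobNorm_smul {d : ℕ} {P A : Matrix (Fin d) (Fin d) ℝ}
    (hP : IsStarProjection P) (hA : A.IsHermitian) : P * A * P ≤ frobNorm A • P := by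
  simpa only [hP.isSelfAdjoint.star_eq, mul_smul_comm, smul_mul_assoc, mul_one,
    hP.isIdempotentElem.eq] using star_left_conjugate_le_conjugate (le_frobNorm_smul_one hA) P

section SpectralProjection

variable {d : ℕ} {Y : Matrix (Fin d) (Fin d) ℝ}

lemma specProj_eq_cfc (hY : Y.IsHermitian) (τ : ℝ) :
    specProj hY τ = cfc (fun t => if τ ≤ |t| then (1:ℝ) else 0) Y := by
  rw [hY.cfc_eq, Matrix.IsHermitian.cfc, Unitary.conjStarAlgAut_apply]
  ext i k
  rw [Matrix.mul_apply]
  simp [specProj, Matrix.sum_apply, Matrix.mul_diagonal,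
    Matrix.IsHermitian.eigenvectorUnitary_apply, Matrix.vecMulVec_apply,
    apply_ite (fun M : Matrix (Fin d) (Fin d) ℝ => M i k)]

lemma isStarProjection_specProj (hY : Y.IsHermitian) (τ : ℝ) :
    IsStarProjection (specProj hY τ) := by
  refine ⟨?_, specProj_eq_cfc hY τ ▸ cfc_predicate _ _⟩
  rw [IsIdempotentElem, specProj_eq_cfc,
    ← cfc_mul _ _ _ (Y.continuousOn_real_spectrum _) (Y.continuousOn_real_spectrum _)]
  congr! 2 with t
  split_ifs <;> norm_num

lemma specProj_mul_mul_specProj (hY : Y.IsHermitian) (τ : ℝ) :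
    specProj hY τ * Y * specProj hY τ = cfc (fun t => if τ ≤ |t| then t else 0) Y := by
  nth_rw 2 [← cfc_id' ℝ Y]
  rw [specProj_eq_cfc,
    ← cfc_mul _ _ _ (Y.continuousOn_real_spectrum _) (Y.continuousOn_real_spectrum _),
    ← cfc_mul _ _ _ (Y.continuousOn_real_spectrum _) (Y.continuousOn_real_spectrum _)]
  congr! 2 with t
  split_ifs <;> ring

lemma smul_specProj_le (hY : Y.PosSemidef) (τ : ℝ) :
    τ • specProj hY.1 τ ≤ specProj hY.1 τ * Y * specProj hY.1 τ := by
  rw [specProj_mul_mul_specProj, specProj_eq_cfc,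
    ← cfc_smul _ _ _ (Y.continuousOn_real_spectrum _)]
  refine cfc_mono (fun t ht => ?_) (Y.continuousOn_real_spectrum _) (Y.continuousOn_real_spectrum _)
  have ht0 : 0 ≤ t := spectrum_nonneg_of_nonneg hY.nonneg ht
  split_ifs with h
  · simpa [abs_of_nonneg ht0] using h
  · simp

lemma specProj_mul_mul_specProj_le (hY : Y.PosSemidef) (τ : ℝ) :
    specProj hY.1 τ * Y * specProj hY.1 τ ≤ Y := by
  conv_rhs => rw [← cfc_id' ℝ Y]
  rw [specProj_mul_mul_specProj]
  refine cfc_mono (fun t ht => ?_) (Y.continuousOn_real_spectrum _) (Y.continuousOn_real_spectrum _)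
  split_ifs
  · rfl
  · exact spectrum_nonneg_of_nonneg hY.nonneg ht

end SpectralProjection

theorem stmt2_general {d : ℕ} (X Y : Matrix (Fin d) (Fin d) ℝ)
    (hX : X.PosSemidef)
    (hY : Y.PosSemidef)
    (τ γ : ℝ) (hγ : γ ∈ Set.Ico (0:ℝ) 1)
    (hcond : frobNorm (X - Y) ≤ γ * τ / (1 - γ)) :
    (Y - (1 - γ) • (specProj hY.1 τ * X * specProj hY.1 τ)).PosSemidef := by
  obtain ⟨hγ0, hγ1⟩ := hγ
  have hP := isStarProjection_specProj hY.1 τ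
  set P := specProj hY.1 τ
  have hcond' : (1 - γ) * frobNorm (X - Y) ≤ γ * τ := by
    rwa [le_div_iff₀ (sub_pos.2 hγ1), mul_comm] at hcond
  have hsmall : (1 - γ) • (P * (X - Y) * P) ≤ γ • (P * Y * P) := calc
    (1 - γ) • (P * (X - Y) * P) ≤ (1 - γ) • frobNorm (X - Y) • P :=
        smul_le_smul_of_nonneg_left (hP.mul_mul_le_frobNorm_smul (hX.1.sub hY.1))
          (sub_nonneg.2 hγ1.le)
    _ = ((1 - γ) * frobNorm (X - Y)) • P := smul_smul _ _ _
    _ ≤ (γ * τ) • P := smul_le_smul_of_nonneg_right hcond' hP.nonneg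
    _ = γ • τ • P := (smul_smul _ _ _).symm
    _ ≤ γ • (P * Y * P) := smul_le_smul_of_nonneg_left (smul_specProj_le hY τ) hγ0
  rw [← Matrix.nonneg_iff_posSemidef, sub_nonneg]
  calc (1 - γ) • (P * X * P) = (1 - γ) • (P * Y * P) + (1 - γ) • (P * (X - Y) * P) := by
        simp only [mul_sub, sub_mul, smul_sub]; abel
    _ ≤ (1 - γ) • (P * Y * P) + γ • (P * Y * P) := add_le_add_right hsmall _
    _ = P * Y * P := by module
    _ ≤ Y := specProj_mul_mul_specProj_le hY τ

theorem stmt2 {d : ℕ} (X Y : Matrix (Fin d) (Fin d) ℝ)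
    (hX : X.PosSemidef) (hXtr : X.trace = 1)
    (hY : Y.PosSemidef) (hYtr : Y.trace = 1)
    (τ γ : ℝ) (hτ : τ ∈ Set.Icc (0:ℝ) 1) (hγ : γ ∈ Set.Ico (0:ℝ) 1)
    (hcond : frobNorm (X - Y) ≤ γ * τ / (1 - γ)) :
    (Y - (1 - γ) • (specProj hY.1 τ * X * specProj hY.1 τ)).PosSemidef :=
  stmt2_general X Y hX hY τ γ hγ hcond
end

section
/- Let X, Y be in the spectrahedron S_d with X = Σ_{i=1}^k a_i x_i x_iᵀ, where each x_i is a unit vector and (a_1,…,a_k) is a probability distribution. Let P be an orthogonal projection onto a subset of eigenvectors of Y, and set x̃_i := P x_i. Then Σ_{i=1}^k a_i (1 - ‖x̃_i‖²) ≤ √(rank(Y)) · ‖Y - P X P‖_F. -/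
open Matrix BigOperators

/-!
Write `M = Y - PXP`. Since `Σ aᵢ = 1` and `tr(P xᵢxᵢᵀ P) = ‖P xᵢ‖²`, the left-hand side is
`tr M`. In an eigenbasis of `Y` we have `M = diag λ - Z` with `Z` (conjugate to `PXP`) positive
semidefinite, so the diagonal entries of `M` at the `d - rank Y` zero eigenvalues are `-Zᵢᵢ ≤ 0`.
Hence `tr M` is at most the sum of the `rank Y` remaining diagonal entries, which Cauchy–Schwarz
bounds by `√(rank Y)` times the Frobenius norm of `M`, the latter being invariant under the
orthogonal change of basis.
-/

open Finset

lemma sum_le_sqrt_card_mul_sqrt_sum_sq {ι : Type*} (s : Finset ι) (f : ι → ℝ) :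
    ∑ i ∈ s, f i ≤ √(#s : ℝ) * √(∑ i ∈ s, f i ^ 2) := by
  rw [← Real.sqrt_mul (Nat.cast_nonneg _)]
  exact (le_abs_self _).trans (Real.abs_le_sqrt sq_sum_le_card_mul_sum_sq)

lemma sum_sq_diag_le_sum_sq {n : Type*} [Fintype n] (s : Finset n) (A : Matrix n n ℝ) :
    ∑ i ∈ s, A i i ^ 2 ≤ ∑ i, ∑ j, A i j ^ 2 :=
  calc ∑ i ∈ s, A i i ^ 2 ≤ ∑ i, A i i ^ 2 :=
        sum_le_sum_of_subset_of_nonneg (subset_univ s) fun _ _ _ => sq_nonneg _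
    _ ≤ ∑ i, ∑ j, A i j ^ 2 :=
        sum_le_sum fun i _ => single_le_sum (fun j _ => sq_nonneg (A i j)) (mem_univ i)

lemma frobNorm_sq {d : ℕ} (A : Matrix (Fin d) (Fin d) ℝ) : frobNorm A ^ 2 = (Aᴴ * A).trace := by
  rw [frobNorm, Real.sq_sqrt (by positivity), sum_comm]
  simp only [trace, Matrix.diag, mul_apply, conjTranspose_apply, star_trivial, sq]

lemma trace_star_mul_mul_of_mem_unitaryGroup {n R : Type*} [Fintype n] [DecidableEq n]
    [CommRing R] [StarRing R] {U : Matrix n n R} (hU : U ∈ unitaryGroup n R) (A : Matrix n n R) :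
    (star U * A * U).trace = A.trace := by
  rw [trace_mul_cycle, mem_unitaryGroup_iff.mp hU, one_mul]

lemma frobNorm_star_mul_mul_of_mem_unitaryGroup {d : ℕ} {U : Matrix (Fin d) (Fin d) ℝ}
    (hU : U ∈ unitaryGroup (Fin d) ℝ) (A : Matrix (Fin d) (Fin d) ℝ) :
    frobNorm (star U * A * U) = frobNorm A := by
  have hconj : star (star U * A * U) * (star U * A * U) = star U * (star A * A) * U := by
    simp only [star_mul, star_star, mul_assoc]
    rw [← mul_assoc U, mem_unitaryGroup_iff.mp hU, one_mul]
  have hsq : frobNorm (star U * A * U) ^ 2 = frobNorm A ^ 2 := by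
    rw [frobNorm_sq, frobNorm_sq, ← star_eq_conjTranspose, hconj,
      trace_star_mul_mul_of_mem_unitaryGroup hU, star_eq_conjTranspose]
  exact (pow_left_inj₀ (Real.sqrt_nonneg _) (Real.sqrt_nonneg _) two_ne_zero).mp hsq

lemma trace_diagonal_sub_le {d : ℕ} (μ : Fin d → ℝ) {Z : Matrix (Fin d) (Fin d) ℝ}
    (hZ : Z.PosSemidef) :
    (diagonal μ - Z).trace ≤ √(Fintype.card {i // μ i ≠ 0}) * frobNorm (diagonal μ - Z) := by
  set M := diagonal μ - Z
  set S := univ.filter (fun i => μ i ≠ 0)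
  have hcard : Fintype.card {i // μ i ≠ 0} = #S := Fintype.card_subtype _
  have hoff_support : ∑ i ∈ univ.filter (fun i => ¬ μ i ≠ 0), M i i ≤ 0 :=
    sum_nonpos fun i hi => by
      simp only [M, Matrix.sub_apply, diagonal_apply_eq, not_not.mp (mem_filter.mp hi).2, zero_sub,
        neg_nonpos]
      exact hZ.diag_nonneg
  calc M.trace = ∑ i ∈ S, M i i + ∑ i ∈ univ.filter (fun i => ¬ μ i ≠ 0), M i i :=
        (sum_filter_add_sum_filter_not _ _ _).symm
    _ ≤ ∑ i ∈ S, M i i := by linarith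
    _ ≤ √(#S : ℝ) * √(∑ i ∈ S, M i i ^ 2) := sum_le_sqrt_card_mul_sqrt_sum_sq S _
    _ ≤ √(Fintype.card {i // μ i ≠ 0}) * frobNorm M := by
        rw [hcard, frobNorm]
        gcongr
        exact sum_sq_diag_le_sum_sq S M

lemma trace_sub_le_sqrt_rank_mul_frobNorm {d : ℕ} {Y Z : Matrix (Fin d) (Fin d) ℝ}
    (hY : Y.IsHermitian) (hZ : Z.PosSemidef) :
    (Y - Z).trace ≤ √(Y.rank) * frobNorm (Y - Z) := by
  set U := (hY.eigenvectorUnitary : Matrix (Fin d) (Fin d) ℝ)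
  have hU : U ∈ unitaryGroup (Fin d) ℝ := hY.eigenvectorUnitary.2
  have hdiag : star U * Y * U = diagonal hY.eigenvalues := by
    simpa using hY.conjStarAlgAut_star_eigenvectorUnitary
  have hconj : star U * (Y - Z) * U = diagonal hY.eigenvalues - star U * Z * U := by
    rw [mul_sub, sub_mul, hdiag]
  have hZ' : (star U * Z * U).PosSemidef := by
    simpa [star_eq_conjTranspose] using hZ.conjTranspose_mul_mul_same U
  rw [← trace_star_mul_mul_of_mem_unitaryGroup hU, ← frobNorm_star_mul_mul_of_mem_unitaryGroup hU,
    hconj, hY.rank_eq_card_non_zero_eigs]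
  exact trace_diagonal_sub_le _ hZ'

lemma vnorm_sq {d : ℕ} (v : Fin d → ℝ) : vnorm v ^ 2 = v ⬝ᵥ v := by
  rw [vnorm, Real.sq_sqrt (by positivity)]
  simp only [dotProduct, sq]

lemma trace_mul_sum_smul_vecMulVec_mul_transpose {d k : ℕ} (A : Matrix (Fin d) (Fin d) ℝ)
    (a : Fin k → ℝ) (x : Fin k → Fin d → ℝ) :
    (A * (∑ i, a i • vecMulVec (x i) (x i)) * Aᵀ).trace = ∑ i, a i * vnorm (A *ᵥ x i) ^ 2 := by
  simp only [mul_sum, sum_mul, trace_sum, Matrix.mul_smul, Matrix.smul_mul, trace_smul, smul_eq_mul,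
    vnorm_sq, mul_vecMulVec, vecMulVec_mul, trace_vecMulVec, vecMul_transpose]

theorem stmt3_general {d k : ℕ} (X Y : Matrix (Fin d) (Fin d) ℝ)
    (hX : X.PosSemidef)
    (hY : Y.PosSemidef) (hYtr : Y.trace = 1)
    (a : Fin k → ℝ) (x : Fin k → Fin d → ℝ)
    (hsum : ∑ i, a i = 1)
    (hdecomp : X = ∑ i, a i • Matrix.vecMulVec (x i) (x i))
    (J : Finset (Fin d)) (P : Matrix (Fin d) (Fin d) ℝ)
    (hP : P = ∑ j ∈ J,
      Matrix.vecMulVec (fun i => hY.1.eigenvectorBasis j i) (fun i => hY.1.eigenvectorBasis j i)) :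
    ∑ i, a i * (1 - (vnorm (P.mulVec (x i))) ^ 2)
      ≤ Real.sqrt (Y.rank) * frobNorm (Y - P * X * P) := by
  have hPsymm : Pᵀ = P := by simp [hP, transpose_sum]
  have hPXP : (P * X * P).PosSemidef := by
    simpa [hPsymm] using hX.mul_mul_conjTranspose_same P
  have htrace : ∑ i, a i * (1 - vnorm (P *ᵥ x i) ^ 2) = (Y - P * X * P).trace := by
    conv_rhs => rw [trace_sub, hYtr, ← congrArg (P * X * ·) hPsymm, hdecomp,
      trace_mul_sum_smul_vecMulVec_mul_transpose]
    simp only [mul_sub, mul_one, sum_sub_distrib, hsum]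
  rw [htrace]
  exact trace_sub_le_sqrt_rank_mul_frobNorm hY.1 hPXP

theorem stmt3 {d k : ℕ} (X Y : Matrix (Fin d) (Fin d) ℝ)
    (hX : X.PosSemidef) (hXtr : X.trace = 1)
    (hY : Y.PosSemidef) (hYtr : Y.trace = 1)
    (a : Fin k → ℝ) (x : Fin k → Fin d → ℝ)
    (ha : ∀ i, 0 ≤ a i) (hsum : ∑ i, a i = 1)
    (hunit : ∀ i, vnorm (x i) = 1)
    (hdecomp : X = ∑ i, a i • Matrix.vecMulVec (x i) (x i))
    (J : Finset (Fin d)) (P : Matrix (Fin d) (Fin d) ℝ)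
    (hP : P = ∑ j ∈ J,
      Matrix.vecMulVec (fun i => hY.1.eigenvectorBasis j i) (fun i => hY.1.eigenvectorBasis j i)) :
    ∑ i, a i * (1 - (vnorm (P.mulVec (x i))) ^ 2)
      ≤ Real.sqrt (Y.rank) * frobNorm (Y - P * X * P) :=
  stmt3_general X Y hX hY hYtr a x hsum hdecomp J P hP
end

section
/- Let f: ℝ^{d×d} → ℝ be convex and β-smooth w.r.t. the Frobenius norm, with minimizer X* over the spectrahedron S_d. Let X_t ∈ S_d, let v be a unit vector maximizing v ↦ -vᵀ∇f(X_t)v, and for η ∈ [0,1] set X_{t+1} = X_t + η(vvᵀ - X_t). Then f(X_{t+1}) - f(X*) ≤ (1-η)(f(X_t) - f(X*)) + (η²β/2)‖vvᵀ - X_t‖_F². -/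
open Matrix BigOperators

lemma spec_entry {d : ℕ} {A : Matrix (Fin d) (Fin d) ℝ} (hA : A.IsHermitian) (i j : Fin d) :
    A i j = ∑ k, hA.eigenvalues k * hA.eigenvectorBasis k i * hA.eigenvectorBasis k j := by
  conv_lhs => rw [hA.spectral_theorem]
  simp [Matrix.mul_apply, Matrix.diagonal_apply, Finset.sum_ite_eq, Matrix.star_apply]
  exact Finset.sum_congr rfl fun k _ => by ring

lemma eigbasis_unit {d : ℕ} {A : Matrix (Fin d) (Fin d) ℝ} (hA : A.IsHermitian) (k : Fin d) :
    ∑ i, (hA.eigenvectorBasis k i) ^ 2 = 1 := by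
  have h := hA.eigenvectorBasis.orthonormal.1 k
  have h2 : ‖hA.eigenvectorBasis k‖ ^ 2 = ∑ i, (hA.eigenvectorBasis k i) ^ 2 := by
    rw [EuclideanSpace.norm_eq, Real.sq_sqrt (by positivity)]
    simp [Real.norm_eq_abs, sq_abs]
  rw [h] at h2; simpa using h2.symm

-- key: linear opt over spectrahedron attained at rank one
lemma key {d : ℕ} (G Z : Matrix (Fin d) (Fin d) ℝ) (hZ : Z ∈ Spectra d)
    (v : Fin d → ℝ)
    (hvmax : ∀ u, vnorm u = 1 → quadForm G v ≤ quadForm G u) :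
    quadForm G v ≤ dotp G Z := by
  obtain ⟨hpsd, htr⟩ := hZ
  have hherm := hpsd.1
  have hdot : dotp G Z = ∑ k, hherm.eigenvalues k * quadForm G (fun i => hherm.eigenvectorBasis k i) := by
    unfold dotp quadForm
    calc ∑ i, ∑ j, G i j * Z i j
        = ∑ i, ∑ j, ∑ k, hherm.eigenvalues k *
            (hherm.eigenvectorBasis k i * G i j * hherm.eigenvectorBasis k j) := by
          refine Finset.sum_congr rfl fun i _ => Finset.sum_congr rfl fun j _ => ?_
          rw [spec_entry hherm i j, Finset.mul_sum]
          exact Finset.sum_congr rfl fun k _ => by ring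
      _ = ∑ i, ∑ k, ∑ j, hherm.eigenvalues k *
            (hherm.eigenvectorBasis k i * G i j * hherm.eigenvectorBasis k j) :=
          Finset.sum_congr rfl fun i _ => Finset.sum_comm
      _ = ∑ k, ∑ i, ∑ j, hherm.eigenvalues k *
            (hherm.eigenvectorBasis k i * G i j * hherm.eigenvectorBasis k j) :=
          Finset.sum_comm
      _ = ∑ k, hherm.eigenvalues k * ∑ i, ∑ j,
            (fun i => hherm.eigenvectorBasis k i) i * G i j * (fun i => hherm.eigenvectorBasis k i) j := by
          refine Finset.sum_congr rfl fun k _ => ?_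
          rw [Finset.mul_sum]
          exact Finset.sum_congr rfl fun i _ => by rw [Finset.mul_sum]
  have htr' : ∑ k, hherm.eigenvalues k = 1 := by
    have : Z.trace = ∑ k, hherm.eigenvalues k := by
      rw [Matrix.trace]
      simp only [Matrix.diag]
      have : ∀ i, Z i i = ∑ k, hherm.eigenvalues k * hherm.eigenvectorBasis k i * hherm.eigenvectorBasis k i :=
        fun i => spec_entry hherm i i
      simp_rw [this]
      rw [Finset.sum_comm]
      refine Finset.sum_congr rfl fun k _ => ?_
      have := eigbasis_unit hherm k
      calc ∑ i, hherm.eigenvalues k * hherm.eigenvectorBasis k i * hherm.eigenvectorBasis k i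
          = hherm.eigenvalues k * ∑ i, (hherm.eigenvectorBasis k i)^2 := by
            rw [Finset.mul_sum]; exact Finset.sum_congr rfl fun i _ => by ring
        _ = hherm.eigenvalues k := by rw [this, mul_one]
    rw [← this, htr]
  rw [hdot]
  calc quadForm G v = ∑ k, hherm.eigenvalues k * quadForm G v := by
        rw [← Finset.sum_mul, htr', one_mul]
    _ ≤ ∑ k, hherm.eigenvalues k * quadForm G (fun i => hherm.eigenvectorBasis k i) := by
        refine Finset.sum_le_sum fun k _ => ?_
        refine mul_le_mul_of_nonneg_left ?_ (hpsd.eigenvalues_nonneg k)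
        refine hvmax _ ?_
        unfold vnorm
        rw [eigbasis_unit hherm k, Real.sqrt_one]

theorem stmt9 {d : ℕ} (β : ℝ) (hβ : 0 < β)
    (f : Matrix (Fin d) (Fin d) ℝ → ℝ)
    (g : Matrix (Fin d) (Fin d) ℝ → Matrix (Fin d) (Fin d) ℝ)
    (hconv : ∀ A B, f A + dotp (g A) (B - A) ≤ f B)
    (hsmooth : ∀ A B, f B ≤ f A + dotp (g A) (B - A) + β / 2 * (frobNorm (B - A)) ^ 2)
    (Xt Xs : Matrix (Fin d) (Fin d) ℝ)
    (hXt : Xt ∈ Spectra d) (hXs : Xs ∈ Spectra d)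
    (hmin : ∀ Z ∈ Spectra d, f Xs ≤ f Z)
    (v : Fin d → ℝ) (hv : vnorm v = 1)
    (hvmax : ∀ u, vnorm u = 1 → quadForm (g Xt) v ≤ quadForm (g Xt) u)
    (η : ℝ) (hη : η ∈ Set.Icc (0:ℝ) 1) :
    f (Xt + η • (Matrix.vecMulVec v v - Xt)) - f Xs
      ≤ (1 - η) * (f Xt - f Xs)
        + η ^ 2 * β / 2 * (frobNorm (Matrix.vecMulVec v v - Xt)) ^ 2 := by
  obtain ⟨hη0, hη1⟩ := hη
  set D := Matrix.vecMulVec v v - Xt with hD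
  have hsm := hsmooth Xt (Xt + η • D)
  have hsub : Xt + η • D - Xt = η • D := by abel
  rw [hsub] at hsm
  -- dotp linearity in second arg
  have hdotsmul : dotp (g Xt) (η • D) = η * dotp (g Xt) D := by
    unfold dotp
    rw [Finset.mul_sum]
    refine Finset.sum_congr rfl fun i _ => ?_
    rw [Finset.mul_sum]
    refine Finset.sum_congr rfl fun j _ => ?_
    simp [Matrix.smul_apply]; ring
  -- frobNorm of smul
  have hfrob : (frobNorm (η • D))^2 = η^2 * (frobNorm D)^2 := by
    unfold frobNorm
    rw [Real.sq_sqrt, Real.sq_sqrt]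
    · rw [Finset.mul_sum]
      refine Finset.sum_congr rfl fun i _ => ?_
      rw [Finset.mul_sum]
      refine Finset.sum_congr rfl fun j _ => ?_
      simp [Matrix.smul_apply]; ring
    · positivity
    · positivity
  -- rank-one bound
  have hvv : dotp (g Xt) (Matrix.vecMulVec v v) = quadForm (g Xt) v := by
    unfold dotp quadForm
    refine Finset.sum_congr rfl fun i _ => Finset.sum_congr rfl fun j _ => ?_
    rw [Matrix.vecMulVec_apply]; ring
  have hdotsub : ∀ A B : Matrix (Fin d) (Fin d) ℝ, dotp (g Xt) (A - B) = dotp (g Xt) A - dotp (g Xt) B := by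
    intro A B
    unfold dotp
    rw [← Finset.sum_sub_distrib]
    refine Finset.sum_congr rfl fun i _ => ?_
    rw [← Finset.sum_sub_distrib]
    refine Finset.sum_congr rfl fun j _ => ?_
    simp [Matrix.sub_apply]; ring
  have hkey := key (g Xt) Xs hXs v hvmax
  have hconv' := hconv Xt Xs
  have hDle : dotp (g Xt) D ≤ -(f Xt - f Xs) := by
    rw [hD, hdotsub, hvv]
    have := hdotsub Xs Xt
    linarith
  have hmul : η * dotp (g Xt) D ≤ η * (-(f Xt - f Xs)) :=
    mul_le_mul_of_nonneg_left hDle hη0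
  rw [hdotsmul, hfrob] at hsm
  have h2 : β / 2 * (η^2 * frobNorm D ^ 2) = η^2 * β / 2 * frobNorm D ^ 2 := by ring
  linarith [hsm]
end

section
/- Let f be α-strongly convex and β-smooth over the spectrahedron S_d w.r.t. the Frobenius norm, with minimizer X*. Let X_t ∈ S_d, η_t ∈ [0,1], and define V_t = argmin_{V∈S_d} V·∇f(X_t) + (η_t β/2)‖V - X_t‖_F² and X_{t+1} = X_t + η_t(V_t - X_t). Then, writing h_t = f(X_t) - f(X*), it holds that h_{t+1} ≤ (1 - η_t + η_t²β/α)·h_t. -/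
open Matrix BigOperators

/-!
Smoothness along the step `X + η (V - X)` together with the optimality of `V` against the
competitor `X*` bounds `f(X + η (V - X))` by `f X + η ⟨∇f(X), X* - X⟩ + η²β/2 ‖X* - X‖²`.
Strong convexity at `X` turns the linear term into `-η (h + α/2 ‖X* - X‖²)`, and the quadratic
growth `α/2 ‖X* - X‖² ≤ h` around the constrained minimizer (which rests on the first-order
optimality condition `⟨∇f(X*), Y - X*⟩ ≥ 0` on the convex set `S_d`) bounds the last term by
`η²β/α · h`.
-/

open Filter Topology

lemma nonneg_of_forall_mul_add_sq_nonneg {a b : ℝ}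
    (h : ∀ t : ℝ, 0 < t → t ≤ 1 → 0 ≤ t * a + t ^ 2 * b) : 0 ≤ a := by
  have hlim : Tendsto (fun t : ℝ => a + t * b) (𝓝[>] 0) (𝓝 a) := by
    have hcont : Continuous fun t : ℝ => a + t * b := by fun_prop
    simpa using (hcont.tendsto 0).mono_left nhdsWithin_le_nhds
  refine ge_of_tendsto hlim ?_
  filter_upwards [Ioc_mem_nhdsGT one_pos] with t ⟨ht0, ht1⟩
  refine nonneg_of_mul_nonneg_right ?_ ht0
  linarith [h t ht0 ht1]

section Frobenius

variable {d : ℕ}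

lemma frobNorm_neg (A : Matrix (Fin d) (Fin d) ℝ) : frobNorm (-A) = frobNorm A := by
  simp only [frobNorm, Matrix.neg_apply, neg_sq]

lemma frobNorm_sub_comm (A B : Matrix (Fin d) (Fin d) ℝ) :
    frobNorm (A - B) = frobNorm (B - A) := by
  rw [← frobNorm_neg, neg_sub]

lemma frobNorm_smul (t : ℝ) (A : Matrix (Fin d) (Fin d) ℝ) :
    frobNorm (t • A) = |t| * frobNorm A := by
  simp only [frobNorm, Matrix.smul_apply, smul_eq_mul, mul_pow, ← Finset.mul_sum]
  rw [Real.sqrt_mul (sq_nonneg t), Real.sqrt_sq_eq_abs]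

lemma dotp_sub_right (A B C : Matrix (Fin d) (Fin d) ℝ) :
    dotp A (B - C) = dotp A B - dotp A C := by
  simp only [dotp, Matrix.sub_apply, mul_sub, Finset.sum_sub_distrib]

lemma dotp_smul_right (A : Matrix (Fin d) (Fin d) ℝ) (t : ℝ) (B : Matrix (Fin d) (Fin d) ℝ) :
    dotp A (t • B) = t * dotp A B := by
  simp only [dotp, Matrix.smul_apply, smul_eq_mul, Finset.mul_sum, mul_left_comm]

end Frobenius

lemma convex_spectra (d : ℕ) : Convex ℝ (Spectra d) := by
  intro X hX Y hY a b ha hb hab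
  refine ⟨(hX.1.smul ha).add (hY.1.smul hb), ?_⟩
  simp only [trace_add, trace_smul, hX.2, hY.2, smul_eq_mul, mul_one, hab]

section Descent

variable {d : ℕ} (f : Matrix (Fin d) (Fin d) ℝ → ℝ)
  (g : Matrix (Fin d) (Fin d) ℝ → Matrix (Fin d) (Fin d) ℝ)

def FrobStronglyConvex (α : ℝ) : Prop :=
  ∀ A B, f A + dotp (g A) (B - A) + α / 2 * frobNorm (A - B) ^ 2 ≤ f B

def FrobSmooth (β : ℝ) : Prop :=
  ∀ A B, f B ≤ f A + dotp (g A) (B - A) + β / 2 * frobNorm (B - A) ^ 2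

variable {f g}

lemma FrobSmooth.le_add_smul_sub {β : ℝ} (hsmooth : FrobSmooth f g β)
    (X V : Matrix (Fin d) (Fin d) ℝ) (t : ℝ) :
    f (X + t • (V - X))
      ≤ f X + t * dotp (g X) (V - X) + t ^ 2 * (β / 2 * frobNorm (V - X) ^ 2) := by
  have h := hsmooth X (X + t • (V - X))
  rw [add_sub_cancel_left, dotp_smul_right, frobNorm_smul, mul_pow, sq_abs] at h
  linarith

lemma FrobSmooth.dotp_sub_nonneg_of_isMinOn {β : ℝ} (hsmooth : FrobSmooth f g β)
    {S : Set (Matrix (Fin d) (Fin d) ℝ)} (hS : Convex ℝ S) {Xs Y : Matrix (Fin d) (Fin d) ℝ}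
    (hXs : Xs ∈ S) (hY : Y ∈ S) (hmin : IsMinOn f S Xs) : 0 ≤ dotp (g Xs) (Y - Xs) := by
  refine nonneg_of_forall_mul_add_sq_nonneg (b := β / 2 * frobNorm (Y - Xs) ^ 2)
    fun t ht0 ht1 => ?_
  have hmem : Xs + t • (Y - Xs) ∈ S := hS.add_smul_sub_mem hXs hY ⟨ht0.le, ht1⟩
  linarith [isMinOn_iff.mp hmin _ hmem, hsmooth.le_add_smul_sub Xs Y t]

lemma FrobStronglyConvex.frobNorm_sq_le_of_isMinOn {α β : ℝ} (hsc : FrobStronglyConvex f g α)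
    (hsmooth : FrobSmooth f g β) {S : Set (Matrix (Fin d) (Fin d) ℝ)} (hS : Convex ℝ S)
    {Xs Y : Matrix (Fin d) (Fin d) ℝ} (hXs : Xs ∈ S) (hY : Y ∈ S) (hmin : IsMinOn f S Xs) :
    α / 2 * frobNorm (Y - Xs) ^ 2 ≤ f Y - f Xs := by
  have := hsmooth.dotp_sub_nonneg_of_isMinOn hS hXs hY hmin
  rw [frobNorm_sub_comm]
  linarith [hsc Xs Y]

lemma FrobSmooth.le_of_regularized_le {β η : ℝ} (hsmooth : FrobSmooth f g β) (hη : 0 ≤ η)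
    {X V W : Matrix (Fin d) (Fin d) ℝ}
    (hW : dotp (g X) W + η * β / 2 * frobNorm (W - X) ^ 2
      ≤ dotp (g X) V + η * β / 2 * frobNorm (V - X) ^ 2) :
    f (X + η • (W - X))
      ≤ f X + η * dotp (g X) (V - X) + η ^ 2 * β / 2 * frobNorm (V - X) ^ 2 := by
  have hW' : η * (dotp (g X) (W - X) + η * β / 2 * frobNorm (W - X) ^ 2)
      ≤ η * (dotp (g X) (V - X) + η * β / 2 * frobNorm (V - X) ^ 2) := by
    rw [dotp_sub_right, dotp_sub_right]
    exact mul_le_mul_of_nonneg_left (by linarith) hη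
  linarith [hsmooth.le_add_smul_sub X W η]

end Descent

theorem stmt11_general {d : ℕ} (α β : ℝ) (hα : 0 < α) (hβ : 0 < β)
    (f : Matrix (Fin d) (Fin d) ℝ → ℝ)
    (g : Matrix (Fin d) (Fin d) ℝ → Matrix (Fin d) (Fin d) ℝ)
    (hsc : ∀ A B, f A + dotp (g A) (B - A) + α / 2 * (frobNorm (A - B)) ^ 2 ≤ f B)
    (hsmooth : ∀ A B, f B ≤ f A + dotp (g A) (B - A) + β / 2 * (frobNorm (B - A)) ^ 2)
    (Xt Xs : Matrix (Fin d) (Fin d) ℝ)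
    (hXt : Xt ∈ Spectra d) (hXs : Xs ∈ Spectra d)
    (hmin : ∀ Z ∈ Spectra d, f Xs ≤ f Z)
    (η : ℝ) (hη : η ∈ Set.Icc (0:ℝ) 1)
    (Vt : Matrix (Fin d) (Fin d) ℝ)
    (hVopt : ∀ V ∈ Spectra d,
      dotp (g Xt) Vt + η * β / 2 * (frobNorm (Vt - Xt)) ^ 2
        ≤ dotp (g Xt) V + η * β / 2 * (frobNorm (V - Xt)) ^ 2) :
    f (Xt + η • (Vt - Xt)) - f Xs
      ≤ (1 - η + η ^ 2 * β / α) * (f Xt - f Xs) := by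
  set D := frobNorm (Xt - Xs) ^ 2
  have hstep := FrobSmooth.le_of_regularized_le hsmooth hη.1 (hVopt Xs hXs)
  rw [frobNorm_sub_comm] at hstep
  have hlin : dotp (g Xt) (Xs - Xt) ≤ f Xs - f Xt - α / 2 * D := by linarith [hsc Xt Xs]
  have hgrowth : α / 2 * D ≤ f Xt - f Xs :=
    FrobStronglyConvex.frobNorm_sq_le_of_isMinOn hsc hsmooth (convex_spectra d) hXs hXt hmin
  have hquad : η ^ 2 * β / 2 * D ≤ η ^ 2 * β / α * (f Xt - f Xs) :=
    calc η ^ 2 * β / 2 * D = η ^ 2 * β / α * (α / 2 * D) := by field_simp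
      _ ≤ η ^ 2 * β / α * (f Xt - f Xs) := by gcongr
  have hαD : 0 ≤ η * (α / 2 * D) := mul_nonneg hη.1 (by positivity)
  linarith [mul_le_mul_of_nonneg_left hlin hη.1]

theorem stmt11 {d : ℕ} (α β : ℝ) (hα : 0 < α) (hβ : 0 < β)
    (f : Matrix (Fin d) (Fin d) ℝ → ℝ)
    (g : Matrix (Fin d) (Fin d) ℝ → Matrix (Fin d) (Fin d) ℝ)
    (hsc : ∀ A B, f A + dotp (g A) (B - A) + α / 2 * (frobNorm (A - B)) ^ 2 ≤ f B)
    (hsmooth : ∀ A B, f B ≤ f A + dotp (g A) (B - A) + β / 2 * (frobNorm (B - A)) ^ 2)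
    (Xt Xs : Matrix (Fin d) (Fin d) ℝ)
    (hXt : Xt ∈ Spectra d) (hXs : Xs ∈ Spectra d)
    (hmin : ∀ Z ∈ Spectra d, f Xs ≤ f Z)
    (η : ℝ) (hη : η ∈ Set.Icc (0:ℝ) 1)
    (Vt : Matrix (Fin d) (Fin d) ℝ) (hVt : Vt ∈ Spectra d)
    (hVopt : ∀ V ∈ Spectra d,
      dotp (g Xt) Vt + η * β / 2 * (frobNorm (Vt - Xt)) ^ 2
        ≤ dotp (g Xt) V + η * β / 2 * (frobNorm (V - Xt)) ^ 2) :
    f (Xt + η • (Vt - Xt)) - f Xs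
      ≤ (1 - η + η ^ 2 * β / α) * (f Xt - f Xs) :=
  stmt11_general α β hα hβ f g hsc hsmooth Xt Xs hXt hXs hmin η hη Vt hVopt
end

section
/- Let X ∈ S_d with X = Σ_{i=1}^k a_i x_i x_iᵀ (x_i unit vectors, (a_i) a probability distribution), and let f be β-smooth and convex with minimizer X* over S_d. For η > 0 and each i, let v_i be a unit vector exactly maximizing v ↦ vᵀ(-∇f(X) + ηβ x_i x_iᵀ)v. Then Σ_{i=1}^k a_i [ (v_i v_iᵀ - x_i x_iᵀ)·∇f(X) + (ηβ/2)‖v_i v_iᵀ - x_i x_iᵀ‖_F² ] ≤ -(f(X) - f(X*)) + ηβ. -/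
open Matrix BigOperators

/-!
The `i`-th summand equals `-vᵢᵀ Mᵢ vᵢ - xᵢᵀ ∇f(X) xᵢ + ηβ` with `Mᵢ = -∇f(X) + ηβ xᵢxᵢᵀ`,
because `‖vvᵀ - xxᵀ‖_F² = 2 - 2 (v·x)²` for unit vectors. Since `vᵢ` maximizes `uᵀ Mᵢ u` on the sphere
and the rank-one term is `≥ 0`, `-vᵢᵀ Mᵢ vᵢ ≤ wᵀ ∇f(X) w` for every unit `w`; averaging over the
spectral decomposition of `X*` gives `-vᵢᵀ Mᵢ vᵢ ≤ X*·∇f(X)`. Averaging over `i` with weights `aᵢ`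
leaves `(X* - X)·∇f(X) + ηβ`, and convexity bounds the first term by `-(f(X) - f(X*))`.
-/

theorem Matrix.IsHermitian.eq_sum_eigenvalues_smul_vecMulVec {n : Type*} [Fintype n]
    [DecidableEq n] {A : Matrix n n ℝ} (hA : A.IsHermitian) :
    A = ∑ l, hA.eigenvalues l •
      vecMulVec (fun i => hA.eigenvectorBasis l i) (fun i => hA.eigenvectorBasis l i) := by
  ext i j
  conv_lhs => rw [hA.spectral_theorem]
  simp [Matrix.mul_apply, diagonal_apply, Matrix.sum_apply, vecMulVec_apply,
    eigenvectorUnitary_apply]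
  exact Finset.sum_congr rfl fun l _ => by ring

section

variable {d : ℕ}

lemma sum_sq_eq_one_of_vnorm_eq_one {u : Fin d → ℝ} (hu : vnorm u = 1) : ∑ i, u i ^ 2 = 1 := by
  rwa [vnorm, Real.sqrt_eq_one] at hu

lemma vnorm_eigenvectorBasis {A : Matrix (Fin d) (Fin d) ℝ} (hA : A.IsHermitian) (l : Fin d) :
    vnorm (fun i => hA.eigenvectorBasis l i) = 1 := by
  have h := hA.eigenvectorBasis.orthonormal.1 l
  rw [EuclideanSpace.norm_eq] at h
  simpa [vnorm, sq_abs] using h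

lemma sum_sum_const_mul_mul_eq_mul_sq (c : ℝ) (p : Fin d → ℝ) :
    ∑ i, ∑ j, c * (p i * p j) = c * (∑ i, p i) ^ 2 := by
  simp only [← Finset.mul_sum, sq, Finset.sum_mul_sum]

lemma dotp_comm (A B : Matrix (Fin d) (Fin d) ℝ) : dotp A B = dotp B A := by
  simp only [dotp, mul_comm]

lemma dotp_sub_left (A B C : Matrix (Fin d) (Fin d) ℝ) :
    dotp (A - B) C = dotp A C - dotp B C := by
  simp only [dotp, Matrix.sub_apply, sub_mul, Finset.sum_sub_distrib]

lemma dotp_smul_left (c : ℝ) (A B : Matrix (Fin d) (Fin d) ℝ) :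
    dotp (c • A) B = c * dotp A B := by
  simp only [dotp, Matrix.smul_apply, smul_eq_mul, Finset.mul_sum, mul_assoc]

lemma dotp_sum_left {ι : Type*} (s : Finset ι) (A : ι → Matrix (Fin d) (Fin d) ℝ)
    (B : Matrix (Fin d) (Fin d) ℝ) : dotp (∑ m ∈ s, A m) B = ∑ m ∈ s, dotp (A m) B := by
  simp only [dotp, Matrix.sum_apply, Finset.sum_mul]
  rw [Finset.sum_congr rfl fun i _ => Finset.sum_comm]
  exact Finset.sum_comm

lemma dotp_vecMulVec (u : Fin d → ℝ) (B : Matrix (Fin d) (Fin d) ℝ) :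
    dotp (vecMulVec u u) B = quadForm B u := by
  simp only [dotp, quadForm, vecMulVec_apply]
  exact Finset.sum_congr rfl fun i _ => Finset.sum_congr rfl fun j _ => by ring

lemma dotp_sum_smul_vecMulVec {ι : Type*} [Fintype ι] (a : ι → ℝ) (x : ι → Fin d → ℝ)
    (B : Matrix (Fin d) (Fin d) ℝ) :
    dotp (∑ m, a m • vecMulVec (x m) (x m)) B = ∑ m, a m * quadForm B (x m) := by
  simp only [dotp_sum_left, dotp_smul_left, dotp_vecMulVec]

lemma quadForm_neg_add_smul_vecMulVec (G : Matrix (Fin d) (Fin d) ℝ) (c : ℝ)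
    (x u : Fin d → ℝ) :
    quadForm (-G + c • vecMulVec x x) u = -quadForm G u + c * (∑ i, u i * x i) ^ 2 := by
  rw [← sum_sum_const_mul_mul_eq_mul_sq, quadForm, quadForm, ← Finset.sum_neg_distrib,
    ← Finset.sum_add_distrib]
  refine Finset.sum_congr rfl fun i _ => ?_
  rw [← Finset.sum_neg_distrib, ← Finset.sum_add_distrib]
  refine Finset.sum_congr rfl fun j _ => ?_
  simp only [Matrix.add_apply, Matrix.neg_apply, Matrix.smul_apply, vecMulVec_apply, smul_eq_mul]
  ring

lemma frobNorm_vecMulVec_sub_vecMulVec_sq {u w : Fin d → ℝ} (hu : vnorm u = 1)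
    (hw : vnorm w = 1) :
    frobNorm (vecMulVec u u - vecMulVec w w) ^ 2 = 2 - 2 * (∑ i, u i * w i) ^ 2 := by
  have hsq_sum : ∀ p : Fin d → ℝ, vnorm p = 1 → ∑ i, ∑ j, p i ^ 2 * p j ^ 2 = 1 := fun p hp => by
    rw [← Finset.sum_mul_sum, sum_sq_eq_one_of_vnorm_eq_one hp, one_mul]
  have expand : ∀ i j, (vecMulVec u u - vecMulVec w w) i j ^ 2
      = u i ^ 2 * u j ^ 2 + -2 * ((u i * w i) * (u j * w j)) + w i ^ 2 * w j ^ 2 := by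
    intro i j
    simp only [Matrix.sub_apply, vecMulVec_apply]
    ring
  rw [frobNorm, Real.sq_sqrt (by positivity)]
  simp only [expand, Finset.sum_add_distrib]
  rw [hsq_sum u hu, hsq_sum w hw, sum_sum_const_mul_mul_eq_mul_sq]
  ring

lemma le_dotp_sum_smul_vecMulVec {ι : Type*} [Fintype ι] {a : ι → ℝ} {x : ι → Fin d → ℝ}
    {G : Matrix (Fin d) (Fin d) ℝ} {c : ℝ} (ha : ∀ m, 0 ≤ a m) (hsum : ∑ m, a m = 1)
    (hc : ∀ m, c ≤ quadForm G (x m)) :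
    c ≤ dotp (∑ m, a m • vecMulVec (x m) (x m)) G := by
  rw [dotp_sum_smul_vecMulVec]
  calc c = ∑ m, a m * c := by rw [← Finset.sum_mul, hsum, one_mul]
    _ ≤ ∑ m, a m * quadForm G (x m) := by gcongr with m; exacts [ha m, hc m]

lemma le_dotp_of_mem_Spectra {Y G : Matrix (Fin d) (Fin d) ℝ} {c : ℝ} (hY : Y ∈ Spectra d)
    (hc : ∀ u, vnorm u = 1 → c ≤ quadForm G u) : c ≤ dotp Y G := by
  obtain ⟨hpsd, htrace⟩ := hY
  rw [hpsd.1.eq_sum_eigenvalues_smul_vecMulVec]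
  refine le_dotp_sum_smul_vecMulVec hpsd.eigenvalues_nonneg ?_
    fun l => hc _ (vnorm_eigenvectorBasis hpsd.1 l)
  simpa [hpsd.1.trace_eq_sum_eigenvalues] using htrace

lemma neg_quadForm_le_of_isMaxOn {G : Matrix (Fin d) (Fin d) ℝ} {c : ℝ} {x v w : Fin d → ℝ}
    (hc : 0 ≤ c) (hw : vnorm w = 1)
    (hv : IsMaxOn (quadForm (-G + c • vecMulVec x x)) {u | vnorm u = 1} v) :
    -quadForm (-G + c • vecMulVec x x) v ≤ quadForm G w := by
  have hw_le := isMaxOn_iff.mp hv w hw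
  rw [quadForm_neg_add_smul_vecMulVec] at hw_le
  have : 0 ≤ c * (∑ i, w i * x i) ^ 2 := by positivity
  linarith

lemma dotp_sub_add_frobNorm_sq {G : Matrix (Fin d) (Fin d) ℝ} (c : ℝ) {v x : Fin d → ℝ}
    (hv : vnorm v = 1) (hx : vnorm x = 1) :
    dotp (vecMulVec v v - vecMulVec x x) G + c / 2 * frobNorm (vecMulVec v v - vecMulVec x x) ^ 2
      = -quadForm (-G + c • vecMulVec x x) v - quadForm G x + c := by
  rw [dotp_sub_left, dotp_vecMulVec, dotp_vecMulVec, frobNorm_vecMulVec_sub_vecMulVec_sq hv hx,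
    quadForm_neg_add_smul_vecMulVec]
  ring

end

theorem stmt12_general {d k : ℕ} (β : ℝ) (hβ : 0 < β)
    (f : Matrix (Fin d) (Fin d) ℝ → ℝ)
    (g : Matrix (Fin d) (Fin d) ℝ → Matrix (Fin d) (Fin d) ℝ)
    (hconv : ∀ A B, f A + dotp (g A) (B - A) ≤ f B)
    (X Xs : Matrix (Fin d) (Fin d) ℝ)
    (hXs : Xs ∈ Spectra d)
    (a : Fin k → ℝ) (x : Fin k → Fin d → ℝ)
    (ha : ∀ i, 0 ≤ a i) (hsum : ∑ i, a i = 1)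
    (hunit : ∀ i, vnorm (x i) = 1)
    (hdecomp : X = ∑ i, a i • Matrix.vecMulVec (x i) (x i))
    (η : ℝ) (hη : 0 < η)
    (v : Fin k → Fin d → ℝ) (hvunit : ∀ i, vnorm (v i) = 1)
    (hvopt : ∀ i, ∀ u, vnorm u = 1 →
      quadForm (-(g X) + (η * β) • Matrix.vecMulVec (x i) (x i)) u
        ≤ quadForm (-(g X) + (η * β) • Matrix.vecMulVec (x i) (x i)) (v i)) :
    ∑ i, a i *
        (dotp (Matrix.vecMulVec (v i) (v i) - Matrix.vecMulVec (x i) (x i)) (g X)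
          + η * β / 2 *
            (frobNorm (Matrix.vecMulVec (v i) (v i) - Matrix.vecMulVec (x i) (x i))) ^ 2)
      ≤ -(f X - f Xs) + η * β := by
  set G := g X
  have hmax_bound : ∀ i, -quadForm (-G + (η * β) • vecMulVec (x i) (x i)) (v i) ≤ dotp Xs G :=
    fun i => le_dotp_of_mem_Spectra hXs fun _ hw =>
      neg_quadForm_le_of_isMaxOn (by positivity) hw (hvopt i)
  have hX_dotp : dotp X G = ∑ i, a i * quadForm G (x i) := by
    rw [← dotp_sum_smul_vecMulVec, ← hdecomp]
  calc _ = ∑ i, a i * (-quadForm (-G + (η * β) • vecMulVec (x i) (x i)) (v i)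
          - quadForm G (x i) + η * β) := by
        simp only [dotp_sub_add_frobNorm_sq _ (hvunit _) (hunit _)]
    _ ≤ ∑ i, a i * (dotp Xs G - quadForm G (x i) + η * β) := by
        gcongr with i
        · exact ha i
        · exact hmax_bound i
    _ = dotp G (Xs - X) + η * β := by
        simp only [mul_add, mul_sub, Finset.sum_add_distrib, Finset.sum_sub_distrib,
          ← Finset.sum_mul, hsum, dotp_comm G, dotp_sub_left, hX_dotp]
        ring
    _ ≤ -(f X - f Xs) + η * β := by linarith [hconv X Xs]

theorem stmt12 {d k : ℕ} (β : ℝ) (hβ : 0 < β)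
    (f : Matrix (Fin d) (Fin d) ℝ → ℝ)
    (g : Matrix (Fin d) (Fin d) ℝ → Matrix (Fin d) (Fin d) ℝ)
    (hconv : ∀ A B, f A + dotp (g A) (B - A) ≤ f B)
    (hsmooth : ∀ A B, f B ≤ f A + dotp (g A) (B - A) + β / 2 * (frobNorm (B - A)) ^ 2)
    (X Xs : Matrix (Fin d) (Fin d) ℝ)
    (hXmem : X ∈ Spectra d) (hXs : Xs ∈ Spectra d)
    (hmin : ∀ Z ∈ Spectra d, f Xs ≤ f Z)
    (a : Fin k → ℝ) (x : Fin k → Fin d → ℝ)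
    (ha : ∀ i, 0 ≤ a i) (hsum : ∑ i, a i = 1)
    (hunit : ∀ i, vnorm (x i) = 1)
    (hdecomp : X = ∑ i, a i • Matrix.vecMulVec (x i) (x i))
    (η : ℝ) (hη : 0 < η)
    (v : Fin k → Fin d → ℝ) (hvunit : ∀ i, vnorm (v i) = 1)
    (hvopt : ∀ i, ∀ u, vnorm u = 1 →
      quadForm (-(g X) + (η * β) • Matrix.vecMulVec (x i) (x i)) u
        ≤ quadForm (-(g X) + (η * β) • Matrix.vecMulVec (x i) (x i)) (v i)) :
    ∑ i, a i *
        (dotp (Matrix.vecMulVec (v i) (v i) - Matrix.vecMulVec (x i) (x i)) (g X)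
          + η * β / 2 *
            (frobNorm (Matrix.vecMulVec (v i) (v i) - Matrix.vecMulVec (x i) (x i))) ^ 2)
      ≤ -(f X - f Xs) + η * β :=
  stmt12_general β hβ f g hconv X Xs hXs a x ha hsum hunit hdecomp η hη v hvunit hvopt
end

section
/- Suppose a nonnegative sequence (v_t)_{t≥1} satisfies v_1 ≤ 2 and, for all t ≥ 1, v_{t+1} ≤ (1 - η_t/3)v_t + η_t²/2 with η_t = C/(3(t+t_0)), where C ≥ 18 and C/6 - 1 ≤ t_0 ≤ C/2 - 1. Then v_t ≤ C/(t+t_0) for all t ≥ 1. -/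
/-! Induction on `t`. With `s = t + t0 ≥ C / 6` the step size `η = C / (3 s)` is at most `3`, so the
right-hand side of the recursion is monotone in `v_t`; substituting `v_t ≤ C / s` gives
`v_{t+1} ≤ (C / s) (1 - C / (18 s))`, which is at most `C / (s + 1)` as soon as `C ≥ 18`. -/

lemma div_mul_one_sub_le_div_add_one {C s : ℝ} (hC : 18 ≤ C) (hs : 0 < s) :
    C / s * (1 - C / (18 * s)) ≤ C / (s + 1) := by
  have gap : C / (s + 1) - C / s * (1 - C / (18 * s))
      = C * ((C - 18) * s + C) / (18 * s ^ 2 * (s + 1)) := by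
    field_simp
    ring
  rw [← sub_nonneg, gap]
  have hC0 : 0 ≤ C := by linarith
  have hnum : 0 ≤ (C - 18) * s + C := by nlinarith
  positivity

lemma recursion_step_le {C s v : ℝ} (hC : 18 ≤ C) (hs : C / 6 ≤ s) (hv : v ≤ C / s) :
    (1 - C / (3 * s) / 3) * v + (C / (3 * s)) ^ 2 / 2 ≤ C / (s + 1) := by
  have hs0 : 0 < s := by linarith
  have hcoef : 0 ≤ 1 - C / (3 * s) / 3 := by
    rw [sub_nonneg, div_div, div_le_one (by positivity)]
    linarith
  calc (1 - C / (3 * s) / 3) * v + (C / (3 * s)) ^ 2 / 2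
      ≤ (1 - C / (3 * s) / 3) * (C / s) + (C / (3 * s)) ^ 2 / 2 := by gcongr
    _ = C / s * (1 - C / (18 * s)) := by
      field_simp
      ring
    _ ≤ C / (s + 1) := div_mul_one_sub_le_div_add_one hC hs0

theorem stmt14_general (C t0 : ℝ) (hC : 18 ≤ C)
    (ht0l : C / 6 - 1 ≤ t0) (ht0u : t0 ≤ C / 2 - 1)
    (v : ℕ → ℝ) (hv1 : v 1 ≤ 2)
    (η : ℕ → ℝ) (hη : ∀ t, η t = C / (3 * ((t : ℝ) + t0)))
    (hrec : ∀ t, 1 ≤ t → v (t + 1) ≤ (1 - η t / 3) * v t + (η t) ^ 2 / 2) :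
    ∀ t, 1 ≤ t → v t ≤ C / ((t : ℝ) + t0) := by
  intro t ht
  induction t, ht using Nat.le_induction with
  | base =>
    have h1t0 : 0 < 1 + t0 := by linarith
    rw [Nat.cast_one, le_div_iff₀ h1t0]
    nlinarith
  | succ t ht ih =>
    have hs : C / 6 ≤ (t : ℝ) + t0 := by
      have : (1 : ℝ) ≤ t := by exact_mod_cast ht
      linarith
    calc v (t + 1) ≤ (1 - η t / 3) * v t + η t ^ 2 / 2 := hrec t ht
      _ ≤ C / ((t : ℝ) + t0 + 1) := by
        rw [hη]
        exact recursion_step_le hC hs ih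
      _ = C / ((t + 1 : ℕ) + t0) := by push_cast; ring_nf

theorem stmt14 (C t0 : ℝ) (hC : 18 ≤ C)
    (ht0l : C / 6 - 1 ≤ t0) (ht0u : t0 ≤ C / 2 - 1)
    (v : ℕ → ℝ) (hnn : ∀ t, 1 ≤ t → 0 ≤ v t) (hv1 : v 1 ≤ 2)
    (η : ℕ → ℝ) (hη : ∀ t, η t = C / (3 * ((t : ℝ) + t0)))
    (hrec : ∀ t, 1 ≤ t → v (t + 1) ≤ (1 - η t / 3) * v t + (η t) ^ 2 / 2) :
    ∀ t, 1 ≤ t → v t ≤ C / ((t : ℝ) + t0) :=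
  stmt14_general C t0 hC ht0l ht0u v hv1 η hη hrec
end

section
/- Suppose a nonnegative sequence (v_t)_{t≥1} satisfies v_1 ≤ 1 and, for all t ≥ 1, v_{t+1} ≤ (1 - η_t/3)v_t + (η_t²/2)·v_t^{1/4} with η_t = C^{3/4}/(3(t+t_0)), where C ≥ 30^{4/3} and C^{3/4}/6 - 1 ≤ t_0 ≤ C^{3/4} - 1. Then v_t ≤ C/(t+t_0)^{4/3} for all t ≥ 1. -/
lemma L1aux (p B : ℝ) (hp : 0 ≤ p) (hB : 5/3 ≤ B) : (1 - B*p)*(1+p/3)^4 ≤ 1 := by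
  have hm : (0:ℝ) ≤ (1+p/3)^4 := by positivity
  rcases le_or_gt (B*p) 1 with h | h
  · have h53 : (5:ℝ)/3*p ≤ B*p := by nlinarith
    have h1 : 1 - B*p ≤ 1 - 5/3*p := by linarith
    have h2 : (0:ℝ) ≤ 1 - 5/3*p := by linarith
    calc (1-B*p)*(1+p/3)^4 ≤ (1-5/3*p)*(1+p/3)^4 := mul_le_mul_of_nonneg_right h1 hm
    _ ≤ 1 := by
        nlinarith [pow_nonneg hp 2, pow_nonneg hp 3, pow_nonneg hp 4, pow_nonneg hp 5,
          mul_nonneg (mul_nonneg hp hp) hp]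
  · nlinarith

lemma coreaux (b w z : ℝ) (hb : 30 ≤ b^3) (hw : 1 ≤ w) (hz : 0 < z) (hzw : z^3 = w^3 + 1) :
    (1 - b^3/(3*w^3)/3) * (b^4/w^4) + (b^3/(3*w^3))^2/2 * (b/w) ≤ b^4/z^4 := by
  have hb0 : 0 < b := by nlinarith [sq_nonneg b]
  have hw0 : 0 < w := by linarith
  set p : ℝ := 1/w^3 with hpdef
  have hp0 : 0 < p := by positivity
  have hwp : w^3 * p = 1 := by rw [hpdef]; field_simp
  set y : ℝ := w*(1+p/3) with hydef
  have hy0 : 0 < y := by positivity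
  have hz3y3 : z^3 ≤ y^3 := by
    rw [hzw, hydef]
    nlinarith [mul_nonneg (pow_pos hw0 3).le (mul_nonneg hp0.le hp0.le),
      mul_nonneg (pow_pos hw0 3).le (mul_nonneg (mul_nonneg hp0.le hp0.le) hp0.le)]
  have hzy : z ≤ y := by nlinarith [sq_nonneg (z - y), sq_nonneg (z + y), mul_pos hz hy0]
  have h1 : b^4/y^4 ≤ b^4/z^4 := by gcongr
  refine le_trans ?_ h1
  have hLHS : (1 - b^3/(3*w^3)/3) * (b^4/w^4) + (b^3/(3*w^3))^2/2 * (b/w)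
      = (b^4/w^4) * (1 - b^3*p/18) := by
    rw [hpdef]
    field_simp
    ring
  rw [hLHS, hydef, mul_pow, ← div_div]
  rw [le_div_iff₀ (by positivity)]
  have hL1 := L1aux p (b^3/18) hp0.le (by linarith)
  calc b^4/w^4 * (1 - b^3*p/18) * (1+p/3)^4
      = (b^4/w^4) * ((1 - (b^3/18)*p) * (1+p/3)^4) := by ring
  _ ≤ (b^4/w^4) * 1 := mul_le_mul_of_nonneg_left hL1 (by positivity)
  _ = b^4/w^4 := mul_one _

theorem stmt15 (C t0 : ℝ) (hC : (30 : ℝ) ^ ((4 : ℝ) / 3) ≤ C)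
    (ht0l : C ^ ((3 : ℝ) / 4) / 6 - 1 ≤ t0) (ht0u : t0 ≤ C ^ ((3 : ℝ) / 4) - 1)
    (v : ℕ → ℝ) (hnn : ∀ t, 1 ≤ t → 0 ≤ v t) (hv1 : v 1 ≤ 1)
    (η : ℕ → ℝ) (hη : ∀ t, η t = C ^ ((3 : ℝ) / 4) / (3 * ((t : ℝ) + t0)))
    (hrec : ∀ t, 1 ≤ t →
      v (t + 1) ≤ (1 - η t / 3) * v t + (η t) ^ 2 / 2 * (v t) ^ ((1 : ℝ) / 4)) :
    ∀ t, 1 ≤ t → v t ≤ C / ((t : ℝ) + t0) ^ ((4 : ℝ) / 3) := by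
  have hC0 : (0:ℝ) < C := lt_of_lt_of_le (Real.rpow_pos_of_pos (by norm_num) _) hC
  set b : ℝ := C ^ ((1:ℝ)/4) with hbdef
  have hb0 : 0 < b := Real.rpow_pos_of_pos hC0 _
  have hb4 : b^4 = C := by
    rw [hbdef, ← Real.rpow_natCast (C ^ ((1:ℝ)/4)) 4, ← Real.rpow_mul hC0.le]
    norm_num
  have hb3 : b^3 = C ^ ((3:ℝ)/4) := by
    rw [hbdef, ← Real.rpow_natCast (C ^ ((1:ℝ)/4)) 3, ← Real.rpow_mul hC0.le]
    norm_num
  have hb30 : 30 ≤ b^3 := by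
    rw [hb3]
    calc (30:ℝ) = ((30:ℝ) ^ ((4:ℝ)/3)) ^ ((3:ℝ)/4) := by
          rw [← Real.rpow_mul (by norm_num : (0:ℝ) ≤ 30)]; norm_num
    _ ≤ C ^ ((3:ℝ)/4) := Real.rpow_le_rpow (by positivity) hC (by norm_num)
  have ht0l' : b^3/6 - 1 ≤ t0 := by rw [hb3]; exact ht0l
  have ht04 : 4 ≤ t0 := by linarith
  intro t ht
  induction t, ht using Nat.le_induction with
  | base =>
    have h1t0 : (0:ℝ) < ((1:ℕ):ℝ) + t0 := by push_cast; linarith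
    have hle : ((1:ℕ):ℝ) + t0 ≤ C ^ ((3:ℝ)/4) := by push_cast; linarith
    have hpow : (((1:ℕ):ℝ) + t0) ^ ((4:ℝ)/3) ≤ C := by
      calc (((1:ℕ):ℝ) + t0) ^ ((4:ℝ)/3)
          ≤ (C ^ ((3:ℝ)/4)) ^ ((4:ℝ)/3) := Real.rpow_le_rpow h1t0.le hle (by norm_num)
      _ = C := by rw [← Real.rpow_mul hC0.le]; norm_num
    have h1 : (1:ℝ) ≤ C / (((1:ℕ):ℝ) + t0) ^ ((4:ℝ)/3) := by
      rw [le_div_iff₀ (by positivity), one_mul]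
      exact hpow
    linarith
  | succ t ht IH =>
    set s : ℝ := (t:ℝ) + t0 with hsdef
    have h1t : (1:ℝ) ≤ (t:ℝ) := by exact_mod_cast ht
    have hs5 : 5 ≤ s := by rw [hsdef]; linarith
    have hs0 : 0 < s := by linarith
    have hsb : b^3 ≤ 6*s := by rw [hsdef]; nlinarith
    set w : ℝ := s ^ ((1:ℝ)/3) with hwdef
    have hw0 : 0 < w := Real.rpow_pos_of_pos hs0 _
    have hw3 : w^3 = s := by
      rw [hwdef, ← Real.rpow_natCast (s ^ ((1:ℝ)/3)) 3, ← Real.rpow_mul hs0.le]; norm_num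
    have hw4 : w^4 = s ^ ((4:ℝ)/3) := by
      rw [hwdef, ← Real.rpow_natCast (s ^ ((1:ℝ)/3)) 4, ← Real.rpow_mul hs0.le]; norm_num
    have h1w : 1 ≤ w := by nlinarith [hw3, sq_nonneg w, sq_nonneg (w-1)]
    have hs10 : (0:ℝ) < s + 1 := by linarith
    set z : ℝ := (s+1) ^ ((1:ℝ)/3) with hzdef
    have hz0 : 0 < z := Real.rpow_pos_of_pos hs10 _
    have hz3 : z^3 = s + 1 := by
      rw [hzdef, ← Real.rpow_natCast ((s+1) ^ ((1:ℝ)/3)) 3, ← Real.rpow_mul hs10.le]; norm_num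
    have hz4 : z^4 = (s+1) ^ ((4:ℝ)/3) := by
      rw [hzdef, ← Real.rpow_natCast ((s+1) ^ ((1:ℝ)/3)) 4, ← Real.rpow_mul hs10.le]; norm_num
    have hηv : η t = b^3/(3*s) := by rw [hη, hb3, hsdef]
    have hη2 : η t ≤ 2 := by
      rw [hηv, div_le_iff₀ (by positivity)]; linarith
    have hη0 : 0 ≤ η t := by rw [hηv]; positivity
    have hmono : 0 ≤ 1 - η t/3 := by linarith
    have hq14 : (C / s ^ ((4:ℝ)/3)) ^ ((1:ℝ)/4) = b / w := by
      rw [Real.div_rpow hC0.le (by positivity), hbdef, hwdef, ← Real.rpow_mul hs0.le]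
      norm_num
    have step1 : v (t+1) ≤ (1 - η t/3) * (C / s ^ ((4:ℝ)/3))
        + (η t)^2/2 * (C / s ^ ((4:ℝ)/3)) ^ ((1:ℝ)/4) := by
      have hIH : v t ≤ C / s ^ ((4:ℝ)/3) := IH
      have h1 : (1 - η t/3) * v t ≤ (1 - η t/3) * (C / s ^ ((4:ℝ)/3)) :=
        mul_le_mul_of_nonneg_left hIH hmono
      have h2 : (v t) ^ ((1:ℝ)/4) ≤ (C / s ^ ((4:ℝ)/3)) ^ ((1:ℝ)/4) :=
        Real.rpow_le_rpow (hnn t ht) hIH (by norm_num)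
      have h3 : (η t)^2/2 * (v t)^((1:ℝ)/4) ≤ (η t)^2/2 * (C / s^((4:ℝ)/3))^((1:ℝ)/4) :=
        mul_le_mul_of_nonneg_left h2 (by positivity)
      linarith [hrec t ht]
    have step2 : (1 - η t/3) * (C / s ^ ((4:ℝ)/3))
        + (η t)^2/2 * (C / s ^ ((4:ℝ)/3)) ^ ((1:ℝ)/4) ≤ b^4/z^4 := by
      rw [hq14, hηv, ← hw4, ← hb4, ← hw3]
      exact coreaux b w z hb30 h1w hz0 (by rw [hz3, hw3])
    have hcast : ((t+1:ℕ):ℝ) + t0 = s + 1 := by rw [hsdef]; push_cast; ring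
    rw [hcast, ← hz4, ← hb4]
    linarith
end

section
/- Suppose a nonnegative sequence (v_t)_{t≥1} satisfies v_1 ≤ 1 and, for all t ≥ 1, v_{t+1} ≤ (1 - η_t/3)v_t + (η_t²/2)·v_t^{1/2} with η_t = C^{1/2}/(3(t+t_0)), where C ≥ 2916 and C^{1/2}/6 - 1 ≤ t_0 ≤ C^{1/2} - 1. Then v_t ≤ C/(t+t_0)² for all t ≥ 1. -/
theorem stmt16 (C t0 : ℝ) (hC : (2916 : ℝ) ≤ C)
    (ht0l : C ^ ((1 : ℝ) / 2) / 6 - 1 ≤ t0) (ht0u : t0 ≤ C ^ ((1 : ℝ) / 2) - 1)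
    (v : ℕ → ℝ) (hnn : ∀ t, 1 ≤ t → 0 ≤ v t) (hv1 : v 1 ≤ 1)
    (η : ℕ → ℝ) (hη : ∀ t, η t = C ^ ((1 : ℝ) / 2) / (3 * ((t : ℝ) + t0)))
    (hrec : ∀ t, 1 ≤ t →
      v (t + 1) ≤ (1 - η t / 3) * v t + (η t) ^ 2 / 2 * (v t) ^ ((1 : ℝ) / 2)) :
    ∀ t, 1 ≤ t → v t ≤ C / ((t : ℝ) + t0) ^ 2 := by
  have hC0 : (0 : ℝ) < C := by linarith
  set s := C ^ ((1 : ℝ) / 2) with hsdef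
  have hs0 : 0 ≤ s := Real.rpow_nonneg hC0.le _
  have hs54 : (54 : ℝ) ≤ s := by
    have h1 : ((2916 : ℝ)) ^ ((1:ℝ)/2) ≤ s :=
      Real.rpow_le_rpow (by norm_num) hC (by norm_num)
    have h2 : ((2916 : ℝ)) ^ ((1:ℝ)/2) = 54 := by
      rw [show (2916:ℝ) = 54 ^ (2:ℕ) by norm_num, ← Real.rpow_natCast (54:ℝ) 2,
        ← Real.rpow_mul (by norm_num)]
      norm_num
    linarith
  have hs2 : s ^ 2 = C := by
    rw [hsdef, ← Real.rpow_natCast (C ^ ((1:ℝ)/2)) 2, ← Real.rpow_mul hC0.le]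
    norm_num
  refine Nat.le_induction ?_ ?_
  · -- base case
    have h1 : (0:ℝ) < (1:ℕ) + t0 := by push_cast; linarith
    rw [le_div_iff₀ (by positivity)]
    have h2 : ((1:ℕ) : ℝ) + t0 ≤ s := by push_cast; linarith
    nlinarith
  · intro t ht ih
    set τ : ℝ := (t : ℝ) + t0 with hτdef
    have ht1 : (1:ℝ) ≤ (t:ℝ) := by exact_mod_cast ht
    have hτ6 : s / 6 ≤ τ := by rw [hτdef]; linarith
    have hτ9 : (8:ℝ) ≤ τ := by linarith
    have hτ0 : (0:ℝ) < τ := by linarith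
    have hv0 : 0 ≤ v t := hnn t ht
    -- sqrt bound
    have hvle : v t ≤ (s / τ) ^ 2 := by
      have : (s/τ)^2 = C / τ^2 := by rw [div_pow, hs2]
      rw [this]; exact ih
    have hvs : (v t) ^ ((1:ℝ)/2) ≤ s / τ := by
      have h := Real.rpow_le_rpow hv0 hvle (by norm_num : (0:ℝ) ≤ 1/2)
      have h2 : ((s/τ)^(2:ℕ)) ^ ((1:ℝ)/2) = s / τ := by
        rw [← Real.rpow_natCast (s/τ) 2, ← Real.rpow_mul (by positivity)]
        norm_num
      rwa [show (s/τ)^2 = (s/τ)^(2:ℕ) by norm_num, h2] at h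
    have hηt : η t = s / (3 * τ) := hη t
    have hη3 : 0 ≤ 1 - η t / 3 := by
      rw [hηt]
      have : s / (3 * τ) ≤ 2 := by
        rw [div_le_iff₀ (by linarith)]; linarith
      linarith
    have hrp : 0 ≤ (v t) ^ ((1:ℝ)/2) := Real.rpow_nonneg hv0 _
    have step1 : v (t + 1) ≤ (1 - η t / 3) * (C / τ^2) + (η t)^2 / 2 * (s / τ) := by
      refine (hrec t ht).trans ?_
      gcongr
    have step2 : (1 - η t / 3) * (C / τ^2) + (η t)^2 / 2 * (s / τ) ≤ C / (τ + 1)^2 := by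
      rw [hηt, ← hs2]
      rw [show (1 - s/(3*τ)/3) * (s^2/τ^2) + (s/(3*τ))^2/2*(s/τ) = (18*s^2*τ - s^3)/(18*τ^3) from by field_simp; ring,
        div_le_div_iff₀ (by positivity) (by positivity)]
      nlinarith [mul_nonneg (mul_nonneg (sub_nonneg.2 hs54) (sq_nonneg s)) (sq_nonneg (τ+1)),
        mul_nonneg (sq_nonneg s) (sq_nonneg τ), mul_nonneg (sq_nonneg s) hτ0.le, sq_nonneg s]
    have : ((t + 1 : ℕ) : ℝ) + t0 = τ + 1 := by push_cast; ring
    rw [this]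
    exact step1.trans step2
end

section
/- Let f: ℝ^{d×d} → ℝ be convex and β-smooth w.r.t. the Frobenius norm with minimizer X* over S_d. Let x_0 be any unit vector and let x_1 be a unit vector with x_1ᵀ(-∇f(x_0 x_0ᵀ))x_1 ≥ λ_max(-∇f(x_0 x_0ᵀ)) - ξ_0 for some ξ_0 ≥ 0. Then f(x_1 x_1ᵀ) - f(X*) ≤ β + ξ_0. -/
open Matrix BigOperators

lemma vnorm_one_iff {d : ℕ} (v : Fin d → ℝ) (h : vnorm v = 1) : ∑ i, (v i)^2 = 1 := by
  have h0 : (0:ℝ) ≤ ∑ i, (v i)^2 := Finset.sum_nonneg fun i _ => sq_nonneg _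
  have := Real.sq_sqrt h0
  unfold vnorm at h
  rw [h] at this
  linarith

lemma entry_spec {d : ℕ} (Xs : Matrix (Fin d) (Fin d) ℝ) (hH : Xs.IsHermitian) (i j : Fin d) :
    Xs i j = ∑ k, hH.eigenvalues k * hH.eigenvectorBasis k i * hH.eigenvectorBasis k j := by
  conv_lhs => rw [hH.spectral_theorem]
  simp [Matrix.mul_apply, Matrix.diagonal, Finset.sum_mul]
  congr 1
  ext k
  ring

theorem stmt17 {d : ℕ} (β : ℝ) (hβ : 0 < β)
    (f : Matrix (Fin d) (Fin d) ℝ → ℝ)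
    (g : Matrix (Fin d) (Fin d) ℝ → Matrix (Fin d) (Fin d) ℝ)
    (hconv : ∀ A B, f A + dotp (g A) (B - A) ≤ f B)
    (hsmooth : ∀ A B, f B ≤ f A + dotp (g A) (B - A) + β / 2 * (frobNorm (B - A)) ^ 2)
    (Xs : Matrix (Fin d) (Fin d) ℝ) (hXs : Xs ∈ Spectra d)
    (hmin : ∀ Z ∈ Spectra d, f Xs ≤ f Z)
    (x0 x1 : Fin d → ℝ) (hx0 : vnorm x0 = 1) (hx1 : vnorm x1 = 1)
    (ξ0 : ℝ) (hξ0 : 0 ≤ ξ0)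
    (hx1opt : ∀ u, vnorm u = 1 →
      quadForm (-(g (Matrix.vecMulVec x0 x0))) u
        ≤ quadForm (-(g (Matrix.vecMulVec x0 x0))) x1 + ξ0) :
    f (Matrix.vecMulVec x1 x1) - f Xs ≤ β + ξ0 := by
  set P0 := Matrix.vecMulVec x0 x0 with hP0
  set P1 := Matrix.vecMulVec x1 x1 with hP1
  set G := g P0 with hG
  have hT0 : ∑ i, (x0 i)^2 = 1 := vnorm_one_iff x0 hx0
  have hT1 : ∑ i, (x1 i)^2 = 1 := vnorm_one_iff x1 hx1
  -- hx1opt rewritten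
  have hq : ∀ u, vnorm u = 1 → quadForm G x1 ≤ quadForm G u + ξ0 := by
    intro u hu
    have := hx1opt u hu
    unfold quadForm at this ⊢
    simp only [Matrix.neg_apply, ← hG] at this
    have e1 : ∀ v : Fin d → ℝ, ∑ i, ∑ j, v i * (-(G i j)) * v j = -∑ i, ∑ j, v i * G i j * v j := by
      intro v
      rw [← Finset.sum_neg_distrib]
      congr 1; ext i
      rw [← Finset.sum_neg_distrib]
      congr 1; ext j; ring
    rw [e1, e1] at this
    linarith
  -- Frobenius norm bound
  have hnorm : (frobNorm (P1 - P0))^2 ≤ 2 := by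
    have h0 : (0:ℝ) ≤ ∑ i, ∑ j, ((P1 - P0) i j)^2 :=
      Finset.sum_nonneg fun i _ => Finset.sum_nonneg fun j _ => sq_nonneg _
    unfold frobNorm
    rw [Real.sq_sqrt h0]
    have hent : ∀ i j, (P1 - P0) i j = x1 i * x1 j - x0 i * x0 j := by
      intro i j; simp [hP0, hP1, Matrix.vecMulVec_apply]
    have hexp : ∑ i, ∑ j, ((P1 - P0) i j)^2
        = (∑ i, (x1 i)^2) * (∑ j, (x1 j)^2)
          - 2 * (∑ i, x0 i * x1 i)^2 + (∑ i, (x0 i)^2) * (∑ j, (x0 j)^2) := by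
      simp only [hent]
      rw [Finset.sum_mul_sum, Finset.sum_mul_sum, sq (∑ i, x0 i * x1 i), Finset.sum_mul_sum]
      rw [Finset.mul_sum, ← Finset.sum_sub_distrib, ← Finset.sum_add_distrib]
      congr 1; ext i
      rw [Finset.mul_sum, ← Finset.sum_sub_distrib, ← Finset.sum_add_distrib]
      congr 1; ext j; ring
    rw [hexp, hT0, hT1]
    nlinarith [sq_nonneg (∑ i, x0 i * x1 i)]
  -- dotp G P1 = quadForm G x1
  have hdq : ∀ v : Fin d → ℝ, dotp G (Matrix.vecMulVec v v) = quadForm G v := by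
    intro v
    unfold dotp quadForm
    congr 1; ext i; congr 1; ext j; simp [Matrix.vecMulVec_apply]; ring
  -- spectral bound : dotp G Xs ≥ quadForm G x1 - ξ0
  obtain ⟨hpsd, htr⟩ := hXs
  have hH : Xs.IsHermitian := hpsd.1
  have hBnorm : ∀ k, ∑ i, (hH.eigenvectorBasis k i)^2 = 1 := by
    intro k
    have h1 : ‖hH.eigenvectorBasis k‖ = 1 := hH.eigenvectorBasis.orthonormal.1 k
    have h2 := EuclideanSpace.norm_eq (hH.eigenvectorBasis k)
    rw [h1] at h2
    have h3 : ∑ i, ‖hH.eigenvectorBasis k i‖^2 = 1 := by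
      have h0 : (0:ℝ) ≤ ∑ i, ‖hH.eigenvectorBasis k i‖^2 :=
        Finset.sum_nonneg fun i _ => sq_nonneg _
      nlinarith [Real.sq_sqrt h0]
    simpa [Real.norm_eq_abs, sq_abs] using h3
  have hvB : ∀ k, vnorm (fun i => hH.eigenvectorBasis k i) = 1 := by
    intro k
    unfold vnorm
    rw [hBnorm k]
    exact Real.sqrt_one
  have htr' : ∑ k, hH.eigenvalues k = 1 := by
    have : Xs.trace = ∑ k, hH.eigenvalues k := by
      unfold Matrix.trace Matrix.diag
      simp only [entry_spec Xs hH]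
      rw [Finset.sum_comm]
      refine Finset.sum_congr rfl fun k _ => ?_
      have : ∑ i, hH.eigenvalues k * hH.eigenvectorBasis k i * hH.eigenvectorBasis k i
          = hH.eigenvalues k * ∑ i, (hH.eigenvectorBasis k i)^2 := by
        rw [Finset.mul_sum]; exact Finset.sum_congr rfl fun i _ => by ring
      rw [this, hBnorm k, mul_one]
    rw [← this, htr]
  have hXsbound : quadForm G x1 - ξ0 ≤ dotp G Xs := by
    have hdXs : dotp G Xs = ∑ k, hH.eigenvalues k * quadForm G (fun i => hH.eigenvectorBasis k i) := by
      unfold dotp quadForm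
      simp only [entry_spec Xs hH, Finset.mul_sum]
      have h1 : ∀ i : Fin d, ∀ F : Fin d → Fin d → ℝ,
          ∑ j, ∑ k, F j k = ∑ k, ∑ j, F j k := fun i F => Finset.sum_comm
      conv_lhs => rw [Finset.sum_congr rfl (fun i _ => h1 i _)]
      rw [Finset.sum_comm]
      refine Finset.sum_congr rfl fun k _ => Finset.sum_congr rfl fun i _ =>
        Finset.sum_congr rfl fun j _ => by ring
    rw [hdXs]
    have step : ∀ k, hH.eigenvalues k * (quadForm G x1 - ξ0)
        ≤ hH.eigenvalues k * quadForm G (fun i => hH.eigenvectorBasis k i) := by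
      intro k
      apply mul_le_mul_of_nonneg_left _ (hpsd.eigenvalues_nonneg k)
      have := hq _ (hvB k)
      linarith
    calc quadForm G x1 - ξ0 = ∑ k, hH.eigenvalues k * (quadForm G x1 - ξ0) := by
          rw [← Finset.sum_mul, htr', one_mul]
      _ ≤ _ := Finset.sum_le_sum fun k _ => step k
  -- linearity of dotp
  have hlin : dotp G (P1 - P0) - dotp G (Xs - P0) = dotp G P1 - dotp G Xs := by
    unfold dotp
    rw [← Finset.sum_sub_distrib, ← Finset.sum_sub_distrib]
    congr 1; ext i
    rw [← Finset.sum_sub_distrib, ← Finset.sum_sub_distrib]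
    congr 1; ext j
    simp [Matrix.sub_apply]; ring
  have hA := hsmooth P0 P1
  have hB := hconv P0 Xs
  have hfinal : f P1 - f Xs ≤ dotp G P1 - dotp G Xs + β := by
    have hb : β / 2 * (frobNorm (P1 - P0))^2 ≤ β := by nlinarith
    have := hlin
    rw [← hG] at hA hB
    linarith
  have h1 : dotp G P1 = quadForm G x1 := hdq x1
  linarith
end
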